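/- arXiv:1209.2305 — 7 statements merged into one kernel-verified Lean document; each statement's English description precedes it below -/
import Mathlib

section
/- For any two d×d real matrices A and B, det(A−B) = (1/d!) · Σ_{k=0}^{d} (−1)^k · C(d,k) · det((d−k)·A + k·B), where C(d,k) denotes the binomial coefficient. -/
open Polynomial Finset
open scoped fwdDiff

private lemma coeff_comp_X_add_one (p : ℝ[X]) (N k : ℕ) (hN : p.natDegree < N) :
    (p.comp (X + 1)).coeff k = ∑ j ∈ Finset.range N, p.coeff j * (j.choose k : ℝ) := by
  rw [Polynomial.comp, Polynomial.eval₂_eq_sum_range' (C : ℝ →+* ℝ[X]) hN,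
    Polynomial.finset_sum_coeff]
  refine Finset.sum_congr rfl fun j _ => ?_
  simp [Polynomial.coeff_C_mul, Polynomial.coeff_X_add_one_pow]

private lemma fwdDiff_poly (n : ℕ) : ∀ p : ℝ[X], p.natDegree ≤ n → ∀ y : ℝ,
    (Δ_[(1:ℝ)])^[n] (fun x => p.eval x) y = (n.factorial : ℝ) * p.coeff n := by
  induction n with
  | zero =>
    intro p hp y
    obtain ⟨c, rfl⟩ : ∃ c, p = C c := ⟨p.coeff 0, Polynomial.eq_C_of_natDegree_le_zero hp⟩
    simp
  | succ m ih =>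
    intro p hp y
    set q : ℝ[X] := p.comp (X + 1) - p with hq
    have hqc : ∀ k, q.coeff k =
        (∑ j ∈ Finset.range (m + 2), p.coeff j * (j.choose k : ℝ)) - p.coeff k := by
      intro k
      rw [hq, Polynomial.coeff_sub, coeff_comp_X_add_one p (m + 2) k (by omega)]
    have hqdeg : q.natDegree ≤ m := by
      rw [Polynomial.natDegree_le_iff_coeff_eq_zero]
      intro k hk
      rw [hqc k]
      have hsum : (∑ j ∈ Finset.range (m + 2), p.coeff j * (j.choose k : ℝ)) = p.coeff k := by
        rw [Finset.sum_eq_single k]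
        · simp
        · intro j hj hjk
          have hj' : j < m + 2 := Finset.mem_range.mp hj
          have : j < k := by omega
          simp [Nat.choose_eq_zero_of_lt this]
        · intro hk'
          have : p.natDegree < k := by
            have := Finset.mem_range.not.mp hk'
            omega
          simp [Polynomial.coeff_eq_zero_of_natDegree_lt this]
      rw [hsum, sub_self]
    have hqco : q.coeff m = (m + 1 : ℝ) * p.coeff (m + 1) := by
      rw [hqc m, Finset.sum_range_succ, Finset.sum_range_succ,
        Finset.sum_eq_zero (fun j hj => by
          have : j < m := Finset.mem_range.mp hj
          simp [Nat.choose_eq_zero_of_lt this])]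
      simp [Nat.choose_succ_self_right]
      ring
    have hstep : Δ_[(1:ℝ)] (fun x => p.eval x) = fun x => q.eval x := by
      funext x
      simp [fwdDiff, hq, Polynomial.eval_comp]
    rw [Function.iterate_succ_apply, hstep, ih q hqdeg y, hqco, Nat.factorial_succ]
    push_cast
    ring

theorem det_sub_eq_sum_det_combination (d : ℕ) (A B : Matrix (Fin d) (Fin d) ℝ) :
    (A - B).det =
      (1 / (d.factorial : ℝ)) *
        ∑ k ∈ Finset.range (d + 1),
          (-1 : ℝ) ^ k * (d.choose k : ℝ) *
            (((d - k : ℕ) : ℝ) • A + (k : ℝ) • B).det := by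
  set p : ℝ[X] :=
    Matrix.det ((X : ℝ[X]) • (B - A).map C + ((d : ℝ) • A).map C) with hpdef
  have hdeg : p.natDegree ≤ d := by
    simpa using Polynomial.natDegree_det_X_add_C_le (B - A) ((d : ℝ) • A)
  have hcoeff : p.coeff d = (B - A).det := by
    simpa using Polynomial.coeff_det_X_add_C_card (B - A) ((d : ℝ) • A)
  have heval : ∀ t : ℝ, p.eval t = ((t : ℝ) • (B - A) + (d : ℝ) • A).det := by
    intro t
    rw [hpdef, ← Polynomial.coe_evalRingHom, RingHom.map_det]
    congr 1
    ext i j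
    simp [Matrix.map_apply]
  have hmat : ∀ k ∈ Finset.range (d + 1),
      (((d - k : ℕ) : ℝ) • A + (k : ℝ) • B) = ((k : ℝ) • (B - A) + (d : ℝ) • A) := by
    intro k hk
    have hkd' : k ≤ d := Nat.lt_succ_iff.mp (Finset.mem_range.mp hk)
    have hc : ((d - k : ℕ) : ℝ) = (d : ℝ) - (k : ℝ) := by
      rw [Nat.cast_sub hkd']
    rw [hc]
    ext i j
    simp only [Matrix.add_apply, Matrix.smul_apply, Matrix.sub_apply, smul_eq_mul]
    ring
  have hfd := fwdDiff_iter_eq_sum_shift (1 : ℝ) (fun x => p.eval x) d 0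
  rw [fwdDiff_poly d p hdeg 0, hcoeff] at hfd
  have hBA : (B - A).det = (-1 : ℝ) ^ d * (A - B).det := by
    have : B - A = -(A - B) := (neg_sub A B).symm
    rw [this, Matrix.det_neg]
    simp
  have key : ∑ k ∈ Finset.range (d + 1),
      (-1 : ℝ) ^ k * (d.choose k : ℝ) *
        (((d - k : ℕ) : ℝ) • A + (k : ℝ) • B).det
      = (d.factorial : ℝ) * (A - B).det := by
    have h1 : ∀ k ∈ Finset.range (d + 1),
        (-1 : ℝ) ^ k * (d.choose k : ℝ) *
          (((d - k : ℕ) : ℝ) • A + (k : ℝ) • B).det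
        = (-1 : ℝ) ^ d *
            (((-1 : ℤ) ^ (d - k) * (d.choose k : ℤ)) • p.eval (0 + k • (1 : ℝ))) := by
      intro k hk
      have hkd : k ≤ d := Nat.lt_succ_iff.mp (Finset.mem_range.mp hk)
      rw [hmat k hk, ← heval (k : ℝ)]
      have hval : (0 : ℝ) + k • (1 : ℝ) = (k : ℝ) := by simp
      rw [hval, zsmul_eq_mul]
      push_cast
      have hsign : ((-1 : ℝ)) ^ d = (-1 : ℝ) ^ (d - k) * (-1 : ℝ) ^ k := by
        rw [← pow_add, Nat.sub_add_cancel hkd]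
      have heven : ((-1 : ℝ)) ^ (d - k) * (-1 : ℝ) ^ (d - k) = 1 := by
        rw [← pow_add]
        exact Even.neg_one_pow ⟨d - k, rfl⟩
      calc (-1 : ℝ) ^ k * (d.choose k : ℝ) * p.eval (k : ℝ)
          = ((-1 : ℝ) ^ (d - k) * (-1 : ℝ) ^ (d - k)) *
              ((-1 : ℝ) ^ k * (d.choose k : ℝ) * p.eval (k : ℝ)) := by rw [heven, one_mul]
        _ = (-1 : ℝ) ^ d * ((-1 : ℝ) ^ (d - k) * (d.choose k : ℝ) * p.eval (k : ℝ)) := by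
            rw [hsign]; ring
        _ = _ := by ring
    rw [Finset.sum_congr rfl h1, ← Finset.mul_sum, ← hfd, hBA]
    calc (-1 : ℝ) ^ d * ((d.factorial : ℝ) * ((-1 : ℝ) ^ d * (A - B).det))
        = ((-1 : ℝ) ^ d * (-1 : ℝ) ^ d) * ((d.factorial : ℝ) * (A - B).det) := by ring
      _ = (d.factorial : ℝ) * (A - B).det := by
          rw [← pow_add, Even.neg_one_pow ⟨d, rfl⟩, one_mul]
  rw [key]
  have hfac : (d.factorial : ℝ) ≠ 0 := Nat.cast_ne_zero.mpr d.factorial_ne_zero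
  field_simp
end

section
/- If E ⊆ ℝ^d has full Lebesgue measure (its complement is a null set), then there exist sets E_1, …, E_d ⊆ ℝ, each dense in ℝ, such that E_1 × ⋯ × E_d ⊆ E. -/
open MeasureTheory

lemma dense_of_compl_null_aux {A : Set ℝ} (h : volume Aᶜ = 0) : Dense A := by
  rw [dense_iff_inter_open]
  intro U hU hUne
  by_contra hcon
  have hsub : U ⊆ Aᶜ := by
    intro x hx
    by_contra hxA
    exact hcon ⟨x, hx, not_not.mp hxA⟩
  have : volume U = 0 := le_antisymm (h ▸ measure_mono hsub) bot_le
  exact (hU.measure_pos volume hUne).ne' this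

lemma aux_full_measure (d : ℕ) : ∀ E : Set (Fin d → ℝ), volume Eᶜ = 0 →
    ∃ F : Fin d → Set ℝ, (∀ i, Dense (F i)) ∧ Set.pi Set.univ F ⊆ E := by
  induction d with
  | zero =>
    intro E hE
    refine ⟨fun _ => Set.univ, fun i => dense_univ, ?_⟩
    intro x _
    by_contra hx
    have hc : Eᶜ = Set.univ := by
      apply Set.eq_univ_of_forall
      intro y
      have : y = x := Subsingleton.elim y x
      rw [this]; exact hx
    rw [hc] at hE
    rw [show (volume : Measure (Fin 0 → ℝ)) = Measure.pi fun _ => volume from rfl,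
      Measure.pi_univ] at hE
    simp at hE
  | succ d ih =>
    intro E hE
    set e := MeasurableEquiv.piFinSuccAbove (fun _ : Fin (d + 1) => ℝ) 0 with he
    have hmp := measurePreserving_piFinSuccAbove (fun _ : Fin (d + 1) => (volume : Measure ℝ)) 0
    rw [← he] at hmp
    set E' : Set (ℝ × (Fin d → ℝ)) := e.symm ⁻¹' E with hE'
    have hnull : (volume : Measure ℝ).prod (volume : Measure (Fin d → ℝ)) E'ᶜ = 0 := by
      have h1 : ((volume : Measure ℝ).prod (volume : Measure (Fin d → ℝ))) E'ᶜ
          = (Measure.map e (Measure.pi fun _ : Fin (d+1) => (volume : Measure ℝ))) E'ᶜ :=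
        congrArg (fun μ : Measure (ℝ × (Fin d → ℝ)) => μ E'ᶜ) hmp.map_eq.symm
      rw [h1, e.map_apply]
      have : e ⁻¹' E'ᶜ = Eᶜ := by
        ext x
        simp [hE', Set.mem_preimage]
      rw [this]; exact hE
    have hslice := Measure.measure_ae_null_of_prod_null hnull
    set A : Set ℝ := {x : ℝ | volume (Prod.mk x ⁻¹' E'ᶜ) = 0} with hA
    have hAc : volume Aᶜ = 0 := by
      have hAcs : Aᶜ = {x : ℝ | ¬ volume (Prod.mk x ⁻¹' E'ᶜ) = 0} := by
        ext x; simp [hA]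
      rw [hAcs, ← ae_iff]
      exact hslice.mono fun x hx => by simpa using hx
    have hAdense : Dense A := dense_of_compl_null_aux hAc
    obtain ⟨F₁, hF₁A, hF₁c, hF₁d⟩ := hAdense.exists_countable_dense_subset
    set G : Set (Fin d → ℝ) := {y : Fin d → ℝ | ∀ t ∈ F₁, (t, y) ∈ E'} with hG
    have hGc : volume Gᶜ = 0 := by
      have hsub : Gᶜ ⊆ ⋃ t ∈ F₁, Prod.mk t ⁻¹' E'ᶜ := by
        intro y hy
        simp only [hG, Set.mem_compl_iff, Set.mem_setOf_eq, not_forall] at hy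
        obtain ⟨t, ht, hty⟩ := hy
        exact Set.mem_biUnion ht hty
      exact measure_mono_null hsub
        ((measure_biUnion_null_iff hF₁c).mpr fun t ht => hF₁A ht)
    obtain ⟨F', hF'd, hF's⟩ := ih G hGc
    refine ⟨Fin.cons F₁ F', ?_, ?_⟩
    · intro i
      refine Fin.cases ?_ ?_ i
      · simpa using hF₁d
      · intro j; simpa using hF'd j
    · intro x hx
      have hx0 : x 0 ∈ F₁ := by simpa using hx 0 (Set.mem_univ 0)
      have hxt : Fin.tail x ∈ Set.pi Set.univ F' := by
        intro j _
        simpa [Fin.tail] using hx j.succ (Set.mem_univ _)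
      have hxG : Fin.tail x ∈ G := hF's hxt
      have hmem : (x 0, Fin.tail x) ∈ E' := hxG (x 0) hx0
      have hex : e x = (x 0, Fin.tail x) := by
        ext j
        · simp [he, MeasurableEquiv.piFinSuccAbove]
        · simp [he, MeasurableEquiv.piFinSuccAbove, Fin.removeNth, Fin.tail]
      have : e.symm (e x) ∈ E := by
        rw [hex]; exact hmem
      simpa using this

theorem dense_product_subset_of_full_measure (d : ℕ) (E : Set (Fin d → ℝ))
    (hE : volume Eᶜ = 0) :
    ∃ F : Fin d → Set ℝ, (∀ i, Dense (F i)) ∧ Set.pi Set.univ F ⊆ E := by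
  exact aux_full_measure d E hE
end

section
/- Let E be a hyperplane in ℝ^d, e a unit vector orthogonal to E, and f : E → ℝ a Lipschitz d.c. function with Lipschitz constant L. Define h : ℝ^d → ℝ by h(x) = max(0, x·e − f(x − (x·e)e)). Then h is a d.c. function, h(x) = 0 if and only if x·e ≤ f(x − (x·e)e), and the directional derivative of h in the direction e at any point x with h(x) > 0 equals 1. -/
open scoped RealInnerProductSpace

private lemma comp_lin_convex {E : Type*} [NormedAddCommGroup E] [NormedSpace ℝ E]
    {F : Type*} [NormedAddCommGroup F] [NormedSpace ℝ F]
    (φ : F → ℝ) (hφ : ConvexOn ℝ Set.univ φ) (P : E →ₗ[ℝ] F) :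
    ConvexOn ℝ Set.univ (fun x => φ (P x)) := by
  refine ⟨convex_univ, fun x _ y _ a b ha hb hab => ?_⟩
  simpa [map_add, map_smul] using hφ.2 (Set.mem_univ (P x)) (Set.mem_univ (P y)) ha hb hab

theorem dc_domain_aura {d : ℕ} (e : EuclideanSpace ℝ (Fin d)) (he : ‖e‖ = 1)
    (f : (ℝ ∙ e)ᗮ → ℝ) (L : NNReal) (hLip : LipschitzWith L f)
    (hdc : ∃ φ ψ : (ℝ ∙ e)ᗮ → ℝ, ConvexOn ℝ Set.univ φ ∧ ConvexOn ℝ Set.univ ψ ∧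
      ∀ y, f y = φ y - ψ y)
    (h : EuclideanSpace ℝ (Fin d) → ℝ)
    (hdef : ∀ x, h x = max 0 (⟪x, e⟫ - f (Submodule.orthogonalProjectionOnto (ℝ ∙ e)ᗮ x))) :
    (∃ φ ψ : EuclideanSpace ℝ (Fin d) → ℝ,
        ConvexOn ℝ Set.univ φ ∧ ConvexOn ℝ Set.univ ψ ∧ ∀ x, h x = φ x - ψ x) ∧
      (∀ x, h x = 0 ↔ ⟪x, e⟫ ≤ f (Submodule.orthogonalProjectionOnto (ℝ ∙ e)ᗮ x)) ∧
      (∀ x, 0 < h x → HasDerivAt (fun t : ℝ => h (x + t • e)) 1 0) := by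
  have P : EuclideanSpace ℝ (Fin d) →ₗ[ℝ] (ℝ ∙ e)ᗮ :=
    (Submodule.orthogonalProjectionOnto (ℝ ∙ e)ᗮ : EuclideanSpace ℝ (Fin d) →L[ℝ] (ℝ ∙ e)ᗮ).toLinearMap
  refine ⟨?_, ?_, ?_⟩
  · obtain ⟨φ₀, ψ₀, hφ₀, hψ₀, hf⟩ := hdc
    have hinner : ConvexOn ℝ Set.univ (fun x : EuclideanSpace ℝ (Fin d) => ⟪x, e⟫) := by
      refine ⟨convex_univ, fun x _ y _ a b ha hb hab => ?_⟩
      simp only [smul_eq_mul]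
      rw [inner_add_left, real_inner_smul_left, real_inner_smul_left]
    have hΨ : ConvexOn ℝ Set.univ
        (fun x : EuclideanSpace ℝ (Fin d) => φ₀ (Submodule.orthogonalProjectionOnto (ℝ ∙ e)ᗮ x)) :=
      comp_lin_convex φ₀ hφ₀
        (Submodule.orthogonalProjectionOnto (ℝ ∙ e)ᗮ : EuclideanSpace ℝ (Fin d) →L[ℝ] (ℝ ∙ e)ᗮ).toLinearMap
    have hΦ : ConvexOn ℝ Set.univ
        (fun x : EuclideanSpace ℝ (Fin d) =>
          ⟪x, e⟫ + ψ₀ (Submodule.orthogonalProjectionOnto (ℝ ∙ e)ᗮ x)) :=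
      hinner.add (comp_lin_convex ψ₀ hψ₀
        (Submodule.orthogonalProjectionOnto (ℝ ∙ e)ᗮ : EuclideanSpace ℝ (Fin d) →L[ℝ] (ℝ ∙ e)ᗮ).toLinearMap)
    refine ⟨fun x => max (φ₀ (Submodule.orthogonalProjectionOnto (ℝ ∙ e)ᗮ x))
        (⟪x, e⟫ + ψ₀ (Submodule.orthogonalProjectionOnto (ℝ ∙ e)ᗮ x)),
      fun x => φ₀ (Submodule.orthogonalProjectionOnto (ℝ ∙ e)ᗮ x),
      hΨ.sup hΦ, hΨ, fun x => ?_⟩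
    rw [hdef x, hf]
    rw [← max_sub_sub_right, sub_self]
    congr 1
    ring
  · intro x
    rw [hdef x]
    constructor
    · intro hx
      have := le_max_right 0 (⟪x, e⟫ - f (Submodule.orthogonalProjectionOnto (ℝ ∙ e)ᗮ x))
      rw [hx] at this
      linarith
    · intro hx
      rw [max_eq_left (by linarith)]
  · intro x hx
    rw [hdef x] at hx
    set c := ⟪x, e⟫ - f (Submodule.orthogonalProjectionOnto (ℝ ∙ e)ᗮ x) with hc
    have hcpos : 0 < c := by
      by_contra hle
      push_neg at hle
      rw [max_eq_left hle] at hx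
      exact lt_irrefl 0 hx
    have hPe : Submodule.orthogonalProjectionOnto (ℝ ∙ e)ᗮ e = 0 := by
      apply Submodule.orthogonalProjectionOnto_apply_of_mem_orthogonal
      exact Submodule.le_orthogonal_orthogonal _ (Submodule.mem_span_singleton_self e)
    have key : ∀ t : ℝ,
        ⟪x + t • e, e⟫ - f (Submodule.orthogonalProjectionOnto (ℝ ∙ e)ᗮ (x + t • e)) = c + t := by
      intro t
      have h1 : Submodule.orthogonalProjectionOnto (ℝ ∙ e)ᗮ (x + t • e)
          = Submodule.orthogonalProjectionOnto (ℝ ∙ e)ᗮ x := by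
        rw [map_add, map_smul, hPe, smul_zero, add_zero]
      have h2 : ⟪x + t • e, e⟫ = ⟪x, e⟫ + t := by
        rw [inner_add_left, real_inner_smul_left, real_inner_self_eq_norm_sq, he]
        ring
      rw [h1, h2, hc]; ring
    have heq : (fun t : ℝ => h (x + t • e)) =ᶠ[nhds 0] (fun t : ℝ => c + t) := by
      filter_upwards [Metric.ball_mem_nhds (0 : ℝ) hcpos] with t ht
      rw [hdef, key t]
      have : |t| < c := by simpa [Real.dist_eq] using ht
      have := abs_lt.mp this
      rw [max_eq_right (by linarith)]
    have hd : HasDerivAt (fun t : ℝ => c + t) 1 0 := by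
      simpa using (hasDerivAt_id (0 : ℝ)).const_add c
    exact hd.congr_of_eventuallyEq heq
end

section
/- Let f : ℝ^d → ℝ be Lipschitz, c a weakly regular value of f, and define A = f^{-1}((−∞, c]). Then the function g(x) = max(0, f(x) − c) satisfies g^{-1}({0}) = A, and there exist ε > 0 and an open neighborhood U of A such that |u| ≥ ε for every x ∈ U \ A and every u in the Clarke subdifferential ∂*g(x). -/
open Filter

variable {d : ℕ}

/-- The Clarke subdifferential: the closed convex hull of all limits of gradients at
differentiability points converging to `x`. -/
noncomputable def clarkeSubdiff (f : EuclideanSpace ℝ (Fin d) → ℝ)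
    (x : EuclideanSpace ℝ (Fin d)) : Set (EuclideanSpace ℝ (Fin d)) :=
  closure (convexHull ℝ
    {v | ∃ (u : ℕ → EuclideanSpace ℝ (Fin d)) (g : ℕ → EuclideanSpace ℝ (Fin d)),
      Tendsto u atTop (nhds x) ∧ (∀ n, HasGradientAt f (g n) (u n)) ∧
      Tendsto g atTop (nhds v)})

/-- `c` is a weakly regular value of `f`. -/
def IsWeaklyRegularValue (f : EuclideanSpace ℝ (Fin d) → ℝ) (c : ℝ) : Prop :=
  ∃ ε > (0 : ℝ), ∀ x, c < f x → f x < c + ε → ∀ v ∈ clarkeSubdiff f x, ε ≤ ‖v‖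

theorem aura_from_weakly_regular_value (f : EuclideanSpace ℝ (Fin d) → ℝ)
    (L : NNReal) (hLip : LipschitzWith L f) (c : ℝ)
    (hc : IsWeaklyRegularValue f c) :
    (fun x => max 0 (f x - c)) ⁻¹' {0} = f ⁻¹' Set.Iic c ∧
      ∃ ε > (0 : ℝ), ∃ U : Set (EuclideanSpace ℝ (Fin d)), IsOpen U ∧
        f ⁻¹' Set.Iic c ⊆ U ∧
        ∀ x ∈ U \ f ⁻¹' Set.Iic c,
          ∀ u ∈ clarkeSubdiff (fun y => max 0 (f y - c)) x, ε ≤ ‖u‖ := by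
  obtain ⟨ε, hε, hreg⟩ := hc
  constructor
  · ext x
    simp only [Set.mem_preimage, Set.mem_singleton_iff, Set.mem_Iic]
    constructor
    · intro h
      have := le_max_right (0 : ℝ) (f x - c)
      rw [h] at this
      linarith
    · intro h
      exact max_eq_left (by linarith)
  · refine ⟨ε, hε, f ⁻¹' Set.Iio (c + ε), ?_, ?_, ?_⟩
    · exact IsOpen.preimage hLip.continuous isOpen_Iio
    · intro x hx
      simp only [Set.mem_preimage, Set.mem_Iic] at hx
      simp only [Set.mem_preimage, Set.mem_Iio]
      linarith
    · rintro x ⟨hx1, hx2⟩ u hu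
      simp only [Set.mem_preimage, Set.mem_Iio] at hx1
      simp only [Set.mem_preimage, Set.mem_Iic, not_le] at hx2
      refine hreg x hx2 hx1 u ?_
      -- show clarkeSubdiff g x ⊆ clarkeSubdiff f x
      refine closure_mono (convexHull_mono ?_) hu
      rintro v ⟨w, gr, hw, hgrad, hgr⟩
      -- the set where f > c is open and contains x
      have hVopen : IsOpen (f ⁻¹' Set.Ioi c) := IsOpen.preimage hLip.continuous isOpen_Ioi
      have hxV : x ∈ f ⁻¹' Set.Ioi c := hx2
      have hev : ∀ᶠ n in atTop, w n ∈ f ⁻¹' Set.Ioi c :=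
        hw (hVopen.mem_nhds hxV)
      obtain ⟨N, hN⟩ := hev.exists_forall_of_atTop
      refine ⟨fun n => w (n + N), fun n => gr (n + N), ?_, ?_, ?_⟩
      · exact hw.comp (tendsto_add_atTop_nat N)
      · intro n
        have hmem : w (n + N) ∈ f ⁻¹' Set.Ioi c := hN (n + N) (Nat.le_add_left N n)
        have hgn := hgrad (n + N)
        rw [hasGradientAt_iff_hasFDerivAt] at hgn ⊢
        have heq : (fun y => max 0 (f y - c)) =ᶠ[nhds (w (n + N))] (fun y => f y - c) := by
          filter_upwards [hVopen.mem_nhds hmem] with y hy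
          have : c < f y := hy
          exact max_eq_right (by linarith)
        rw [heq.hasFDerivAt_iff] at hgn
        have : HasFDerivAt (fun y => (f y - c) + c) _ (w (n + N)) := hgn.add_const c
        simpa using this
      · exact hgr.comp (tendsto_add_atTop_nat N)
end

section
/- Let A ⊆ ℝ^d be a compact set with positive reach r > 0. Then 0 is a weakly regular value of the distance function d_A(x) = dist(x, A); specifically, for every x with 0 < d_A(x) < r, the distance function is differentiable at x with |∇d_A(x)| = 1. -/
set_option maxHeartbeats 800000

open Filter Metric

variable {E : Type*} [NormedAddCommGroup E] [InnerProductSpace ℝ E] [CompleteSpace E]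

/-- Nearest points of `y` close to `x` are close to the unique nearest point of `x`. -/
lemma near_proj {A : Set E} (hA : IsCompact A) (x a : E) (ha : a ∈ A)
    (huniq : ∀ b ∈ A, dist x b = infDist x A → b = a)
    {δ : ℝ} (hδ : 0 < δ) :
    ∃ η > 0, ∀ y b, dist y x < η → b ∈ A → dist y b = infDist y A → dist b a < δ := by
  by_cases hK : (A \ Metric.ball a δ).Nonempty
  · have hKc : IsCompact (A \ Metric.ball a δ) := by
      rw [Set.diff_eq]
      exact hA.inter_right Metric.isOpen_ball.isClosed_compl
    obtain ⟨b₀, hb₀K, hb₀d⟩ := hKc.exists_infDist_eq_dist hK x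
    have hb₀A : b₀ ∈ A := hb₀K.1
    have hb₀ball : δ ≤ dist b₀ a := by
      have := hb₀K.2
      simpa [Metric.mem_ball, not_lt] using this
    have hm : infDist x A < dist x b₀ := by
      rcases lt_or_eq_of_le (infDist_le_dist_of_mem hb₀A) with h | h
      · exact h
      · exact absurd (huniq b₀ hb₀A h.symm) (by
          intro hb; rw [hb] at hb₀ball; simp at hb₀ball; linarith)
    refine ⟨(dist x b₀ - infDist x A) / 2, by linarith, fun y b hy hb hbd => ?_⟩
    by_contra hcon
    push_neg at hcon
    have hbK : b ∈ A \ Metric.ball a δ := ⟨hb, by simp [Metric.mem_ball, not_lt, hcon]⟩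
    have h1 : dist x b₀ ≤ dist x b := hb₀d ▸ infDist_le_dist_of_mem hbK
    have h2 : dist x b ≤ dist y b + dist y x := by
      have := dist_triangle x y b
      rw [dist_comm x y] at this; linarith [dist_comm y x ▸ this]
    have h3 : infDist y A ≤ infDist x A + dist y x := by
      have := infDist_le_infDist_add_dist (x := y) (y := x) (s := A)
      linarith
    rw [hbd] at h2
    linarith
  · refine ⟨1, one_pos, fun y b _ hb _ => ?_⟩
    rw [Set.not_nonempty_iff_eq_empty, Set.diff_eq_empty] at hK
    simpa [Metric.mem_ball] using hK hb

/-- If `x` has a unique nearest point `a` in the compact set `A` and `infDist x A > 0`, then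
the distance function is differentiable at `x` with gradient `(x - a) / ‖x - a‖`. -/
lemma grad_aux {A : Set E} (hA : IsCompact A) (hAne : A.Nonempty) (x a : E) (ha : a ∈ A)
    (hda : dist x a = infDist x A)
    (huniq : ∀ b ∈ A, dist x b = infDist x A → b = a)
    (hpos : 0 < infDist x A) :
    HasGradientAt (fun y => infDist y A) ((infDist x A)⁻¹ • (x - a)) x := by
  set D := infDist x A with hD
  have hDne : D ≠ 0 := ne_of_gt hpos
  have hxa : ‖x - a‖ = D := by rw [← dist_eq_norm, hda]
  set u : E := D⁻¹ • (x - a) with hu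
  have hxau : x - a = D • u := by
    rw [hu, smul_smul, mul_inv_cancel₀ hDne, one_smul]
  have hnu : ‖u‖ = 1 := by
    rw [hu, norm_smul, hxa, norm_inv, Real.norm_of_nonneg hpos.le, inv_mul_cancel₀ hDne]
  rw [hasGradientAt_iff_hasFDerivAt]
  refine HasFDerivAt.of_isLittleO (Asymptotics.isLittleO_iff.mpr ?_)
  intro c hc
  obtain ⟨η, hη, hnear⟩ := near_proj hA x a ha huniq (δ := c * D / 2) (by positivity)
  have hball : Metric.ball x (min η (2 * D * c)) ∈ nhds x :=
    Metric.ball_mem_nhds x (lt_min hη (by positivity))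
  filter_upwards [hball] with y hy
  rw [Metric.mem_ball] at hy
  set s := ‖y - x‖ with hs
  have hsd : dist y x = s := dist_eq_norm y x
  have hsη : s < η := by rw [← hsd]; exact hy.trans_le (min_le_left _ _)
  have hs2 : s < 2 * D * c := by rw [← hsd]; exact hy.trans_le (min_le_right _ _)
  have hs0 : 0 ≤ s := norm_nonneg _
  set t : ℝ := inner ℝ u (y - x) with ht
  have hts : |t| ≤ s := by
    calc |t| ≤ ‖u‖ * ‖y - x‖ := abs_real_inner_le_norm u (y - x)
    _ = s := by rw [hnu, one_mul]
  -- upper bound : infDist y A ≤ D + t + s^2/(2*D)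
  have hupper : infDist y A ≤ D + t + s ^ 2 / (2 * D) := by
    have h1 : infDist y A ≤ ‖y - a‖ := by
      rw [← dist_eq_norm]; exact infDist_le_dist_of_mem ha
    have hexp : ‖y - a‖ ^ 2 = s ^ 2 + 2 * D * t + D ^ 2 := by
      have : y - a = (y - x) + (x - a) := by abel
      rw [this, norm_add_sq_real, hxa, hxau, inner_smul_right, real_inner_comm]
      ring
    have hRpos : 0 < D + t + s ^ 2 / (2 * D) := by
      have : D + t + s ^ 2 / (2 * D) ≥ D - s + s ^ 2 / (2 * D) := by
        have := (abs_le.mp hts).1; linarith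
      have h2 : 0 < D - s + s ^ 2 / (2 * D) := by
        have heq : D - s + s ^ 2 / (2 * D) = (D ^ 2 + (D - s) ^ 2) / (2 * D) := by
          field_simp; ring
        rw [heq]
        exact div_pos (by nlinarith) (by linarith)
      linarith
    have hsq : ‖y - a‖ ^ 2 ≤ (D + t + s ^ 2 / (2 * D)) ^ 2 := by
      rw [hexp]
      have : (D + t + s ^ 2 / (2 * D)) ^ 2 - (s ^ 2 + 2 * D * t + D ^ 2)
          = (t + s ^ 2 / (2 * D)) ^ 2 := by field_simp; ring
      nlinarith [sq_nonneg (t + s ^ 2 / (2 * D))]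
    nlinarith [norm_nonneg (y - a), h1]
  -- lower bound
  obtain ⟨b, hbA, hbd⟩ := hA.exists_infDist_eq_dist hAne y
  have hbδ : dist b a < c * D / 2 := hnear y b (hsd ▸ hy.trans_le (min_le_left _ _)) hbA hbd.symm
  set B := ‖x - b‖ with hB
  have hBd : B = dist x b := (dist_eq_norm x b).symm
  have hBD : D ≤ B := by rw [hBd]; exact infDist_le_dist_of_mem hbA
  have hB0 : 0 < B := lt_of_lt_of_le hpos hBD
  have hBub : B ≤ D + dist a b := by
    rw [hBd, ← hda]
    exact dist_triangle x a b
  set v : E := B⁻¹ • (x - b) with hv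
  have hnv : ‖v‖ = 1 := by
    rw [hv, norm_smul, norm_inv, Real.norm_of_nonneg hB0.le, inv_mul_cancel₀ (ne_of_gt hB0)]
  have hvu : ‖v - u‖ ≤ 2 * dist a b / D := by
    have hsplit : v - u = (B⁻¹ - D⁻¹) • (x - b) + D⁻¹ • (a - b) := by
      rw [hv, hu]; module
    have h1 : ‖(B⁻¹ - D⁻¹) • (x - b)‖ = |B⁻¹ - D⁻¹| * B := by
      rw [norm_smul, Real.norm_eq_abs, ← hB]
    have h2 : ‖D⁻¹ • (a - b)‖ = D⁻¹ * dist a b := by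
      rw [norm_smul, norm_inv, Real.norm_of_nonneg hpos.le, ← dist_eq_norm]
    have h3 : |B⁻¹ - D⁻¹| * B = (B - D) / D := by
      rw [abs_of_nonpos (by
        simp only [sub_nonpos]
        exact inv_anti₀ hpos hBD)]
      field_simp [hDne, ne_of_gt hB0]
      ring
    calc ‖v - u‖ ≤ ‖(B⁻¹ - D⁻¹) • (x - b)‖ + ‖D⁻¹ • (a - b)‖ := by
          rw [hsplit]; exact norm_add_le _ _
      _ = (B - D) / D + dist a b / D := by rw [h1, h2, h3, inv_mul_eq_div]
      _ = (B - D + dist a b) / D := by rw [← add_div]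
      _ ≤ 2 * dist a b / D := by
          gcongr
          linarith
  have hCS : (inner ℝ v (y - b) : ℝ) ≤ ‖y - b‖ := by
    calc (inner ℝ v (y - b) : ℝ) ≤ ‖v‖ * ‖y - b‖ := real_inner_le_norm v (y - b)
      _ = ‖y - b‖ := by rw [hnv, one_mul]
  have hsplit2 : (inner ℝ v (y - b) : ℝ) = B + t + inner ℝ (v - u) (y - x) := by
    have hyb : y - b = (y - x) + (x - b) := by abel
    rw [hyb, inner_add_right]
    have h1 : (inner ℝ v (x - b) : ℝ) = B := by
      rw [hv, real_inner_smul_left, real_inner_self_eq_norm_sq, ← hB]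
      field_simp [ne_of_gt hB0]
    have h2 : (inner ℝ v (y - x) : ℝ) = t + inner ℝ (v - u) (y - x) := by
      rw [inner_sub_left, ht]; ring
    rw [h1, h2]; ring
  have hinbd : |(inner ℝ (v - u) (y - x) : ℝ)| ≤ c * s := by
    calc |(inner ℝ (v - u) (y - x) : ℝ)| ≤ ‖v - u‖ * ‖y - x‖ := abs_real_inner_le_norm _ _
      _ ≤ (2 * dist a b / D) * s := by
          rw [← hs]
          exact mul_le_mul_of_nonneg_right hvu hs0
      _ ≤ c * s := by
          apply mul_le_mul_of_nonneg_right ?_ hs0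
          rw [dist_comm a b, div_le_iff₀ hpos]
          linarith
  have hlower : D + t - c * s ≤ infDist y A := by
    have hyb : infDist y A = ‖y - b‖ := by rw [hbd, dist_eq_norm]
    rw [hyb]
    have := (abs_le.mp hinbd).1
    nlinarith
  have hupper2 : infDist y A ≤ D + t + c * s := by
    have : s ^ 2 / (2 * D) ≤ c * s := by
      rw [div_le_iff₀ (by positivity)]
      nlinarith
    linarith
  simp only [InnerProductSpace.toDual_apply_apply]
  rw [Real.norm_eq_abs, ← ht, ← hD, abs_le]
  constructor <;> linarith

variable {d : ℕ}

theorem distance_function_positive_reach (A : Set (EuclideanSpace ℝ (Fin d)))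
    (hA : IsCompact A) (hAne : A.Nonempty) (r : ℝ) (hr : 0 < r)
    (hreach : ∀ x : EuclideanSpace ℝ (Fin d), Metric.infDist x A < r →
      ∃! a, a ∈ A ∧ dist x a = Metric.infDist x A) :
    (∀ x : EuclideanSpace ℝ (Fin d),
        0 < Metric.infDist x A → Metric.infDist x A < r →
        ∃ g : EuclideanSpace ℝ (Fin d),
          HasGradientAt (fun y => Metric.infDist y A) g x ∧ ‖g‖ = 1) ∧
      ∃ ε > (0 : ℝ), ∀ x : EuclideanSpace ℝ (Fin d),
        0 < Metric.infDist x A → Metric.infDist x A < ε →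
        ∀ v ∈ clarkeSubdiff (fun y => Metric.infDist y A) x, ε ≤ ‖v‖ := by
  choose P hPmem hPdist using fun y => hA.exists_infDist_eq_dist hAne y
  have huniqP : ∀ y, infDist y A < r → ∀ b ∈ A, dist y b = infDist y A → b = P y := by
    intro y hy b hb hbd
    obtain ⟨a₀, _, ha₀u⟩ := hreach y hy
    rw [ha₀u b ⟨hb, hbd⟩, ha₀u (P y) ⟨hPmem y, (hPdist y).symm⟩]
  have hgrad : ∀ y, 0 < infDist y A → infDist y A < r →
      HasGradientAt (fun z => infDist z A) ((infDist y A)⁻¹ • (y - P y)) y :=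
    fun y h0 h1 => grad_aux hA hAne y (P y) (hPmem y) (hPdist y).symm (huniqP y h1) h0
  have hnorm : ∀ y, 0 < infDist y A → ‖(infDist y A)⁻¹ • (y - P y)‖ = 1 := by
    intro y h0
    rw [norm_smul, norm_inv, Real.norm_of_nonneg h0.le, ← dist_eq_norm, ← hPdist y,
      inv_mul_cancel₀ (ne_of_gt h0)]
  refine ⟨fun x hx0 hxr => ⟨_, hgrad x hx0 hxr, hnorm x hx0⟩, min 1 r, lt_min one_pos hr, ?_⟩
  intro x hx0 hxε v hv
  have hxr : infDist x A < r := lt_of_lt_of_le hxε (min_le_right _ _)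
  set g₀ : EuclideanSpace ℝ (Fin d) := (infDist x A)⁻¹ • (x - P x) with hg₀
  have hsub : {v : EuclideanSpace ℝ (Fin d) |
      ∃ (u : ℕ → EuclideanSpace ℝ (Fin d)) (g : ℕ → EuclideanSpace ℝ (Fin d)),
      Tendsto u atTop (nhds x) ∧
        (∀ n, HasGradientAt (fun y => infDist y A) (g n) (u n)) ∧
      Tendsto g atTop (nhds v)} ⊆ {g₀} := by
    rintro w ⟨u, g, hu, hg, hgw⟩
    have hdist : Tendsto (fun n => infDist (u n) A) atTop (nhds (infDist x A)) :=
      ((continuous_infDist_pt A).tendsto x).comp hu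
    have hev : ∀ᶠ n in atTop, 0 < infDist (u n) A ∧ infDist (u n) A < r :=
      (hdist.eventually_const_lt hx0).and (hdist.eventually_lt_const hxr)
    have hP : Tendsto (fun n => P (u n)) atTop (nhds (P x)) := by
      rw [Metric.tendsto_atTop]
      intro δ hδ
      obtain ⟨η, hη, hnear⟩ := near_proj hA x (P x) (hPmem x) (huniqP x hxr) hδ
      obtain ⟨N, hN⟩ := Metric.tendsto_atTop.mp hu η hη
      exact ⟨N, fun n hn => hnear (u n) (P (u n)) (hN n hn) (hPmem (u n)) (hPdist (u n)).symm⟩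
    have hG : Tendsto (fun n => (infDist (u n) A)⁻¹ • (u n - P (u n))) atTop (nhds g₀) :=
      (hdist.inv₀ (ne_of_gt hx0)).smul (hu.sub hP)
    have heq : ∀ᶠ n in atTop, (infDist (u n) A)⁻¹ • (u n - P (u n)) = g n := by
      filter_upwards [hev] with n ⟨h0, h1⟩
      exact (hgrad (u n) h0 h1).unique (hg n)
    have : Tendsto g atTop (nhds g₀) := hG.congr' heq
    exact tendsto_nhds_unique hgw this
  have hvg : v = g₀ := by
    have h1 : clarkeSubdiff (fun y => infDist y A) x ⊆ {g₀} := by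
      unfold clarkeSubdiff
      calc closure (convexHull ℝ _) ⊆ closure (convexHull ℝ {g₀}) :=
            closure_mono (convexHull_mono hsub)
        _ = {g₀} := by rw [convexHull_singleton, closure_singleton]
    exact h1 hv
  rw [hvg, hg₀, hnorm x hx0]
  exact min_le_left _ _
end

section
/- Let F : ℝ^d → ℝ^k and G : ℝ^m → ℝ^d be mappings each of whose components is a d.c. function (locally). Then the composition F ∘ G : ℝ^m → ℝ^k is a d.c. mapping, provided F is locally Lipschitz (which holds automatically for d.c. mappings). -/
open Set Metric NNReal

/-- A real-valued function on `ℝ^n` is d.c. if it is a difference of two convex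
functions. -/
def IsDC {n : ℕ} (f : (Fin n → ℝ) → ℝ) : Prop :=
  ∃ φ ψ : (Fin n → ℝ) → ℝ, ConvexOn ℝ Set.univ φ ∧ ConvexOn ℝ Set.univ ψ ∧
    ∀ x, f x = φ x - ψ x


/-- Composition with a monotone convex outer function. -/
lemma compMonoConvex {m : ℕ} {s : Set (Fin m → ℝ)} {t : Set ℝ} {T : (Fin m → ℝ) → ℝ} {ω : ℝ → ℝ}
    (hT : ConvexOn ℝ s T) (hω : ConvexOn ℝ t ω) (hmono : MonotoneOn ω t)
    (hmem : ∀ y ∈ s, T y ∈ t) : ConvexOn ℝ s (fun y => ω (T y)) := by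
  refine ⟨hT.1, fun a ha b hb p q hp hq hpq => ?_⟩
  have h1 : T (p•a+q•b) ≤ p * T a + q * T b := hT.2 ha hb hp hq hpq
  have hmem2 : p * T a + q * T b ∈ t := by
    simpa [smul_eq_mul] using hω.1 (hmem a ha) (hmem b hb) hp hq hpq
  calc ω (T (p•a+q•b)) ≤ ω (p * T a + q * T b) :=
        hmono (hmem _ (hT.1 ha hb hp hq hpq)) hmem2 h1
    _ ≤ p * ω (T a) + q * ω (T b) := by
        simpa [smul_eq_mul] using hω.2 (hmem a ha) (hmem b hb) hp hq hpq

/-- A function convex on a unit ball around every point is convex. -/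
lemma locallyConvex_convex {m : ℕ} {f : (Fin m → ℝ) → ℝ}
    (hf : ∀ x, ConvexOn ℝ (ball x 1) f) : ConvexOn ℝ univ f := by
  have hcont : Continuous f := by
    rw [continuous_iff_continuousAt]
    intro x
    exact ((hf x).continuousOn isOpen_ball).continuousAt (ball_mem_nhds x one_pos)
  refine ⟨convex_univ, fun a _ b _ p q hp hq hpq => ?_⟩
  set γ : ℝ → (Fin m → ℝ) := fun τ => a + τ • (b - a) with hγ
  set u : ℝ → ℝ := fun τ => f (γ τ) - ((1 - τ) * f a + τ * f b) with hu
  have hγc : Continuous γ := by continuity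
  have huc : Continuous u := by continuity
  have key : ∀ τ ∈ Icc (0:ℝ) 1, u τ ≤ 0 := by
    by_contra hcon
    push_neg at hcon
    obtain ⟨τ₀, hτ₀, hpos⟩ := hcon
    obtain ⟨tm, htm, hmax⟩ := isCompact_Icc.exists_isMaxOn (nonempty_Icc.mpr zero_le_one)
      huc.continuousOn
    set M := u tm with hM
    have hMpos : 0 < M := lt_of_lt_of_le hpos (hmax hτ₀)
    set A : Set ℝ := Icc 0 1 ∩ u ⁻¹' {M} with hA
    have hAne : A.Nonempty := ⟨tm, htm, rfl⟩
    have hAcp : IsCompact A := isCompact_Icc.inter_right (isClosed_singleton.preimage huc)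
    set t₀ := sSup A with ht₀
    have ht₀A : t₀ ∈ A := hAcp.sSup_mem hAne
    obtain ⟨⟨h0t, ht1⟩, huM⟩ := ht₀A
    have huM : u t₀ = M := huM
    have hu0 : u 0 = 0 := by simp [hu, hγ]
    have hu1 : u 1 = 0 := by simp [hu, hγ]
    have ht0lt : 0 < t₀ := by
      rcases eq_or_lt_of_le h0t with h | h
      · exfalso; rw [← h] at huM; rw [hu0] at huM; linarith
      · exact h
    have ht1lt : t₀ < 1 := by
      rcases eq_or_lt_of_le ht1 with h | h
      · exfalso; rw [h] at huM; rw [hu1] at huM; linarith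
      · exact h
    set δ : ℝ := min (min t₀ (1 - t₀)) (1 / (2 * (‖b - a‖ + 1))) with hδ
    have hδpos : 0 < δ := by
      refine lt_min (lt_min ht0lt (by linarith)) (by positivity)
    have hδt : δ ≤ t₀ := le_trans (min_le_left _ _) (min_le_left _ _)
    have hδ1t : δ ≤ 1 - t₀ := le_trans (min_le_left _ _) (min_le_right _ _)
    have hδn : δ * ‖b - a‖ < 1 := by
      have h1 : δ ≤ 1 / (2 * (‖b - a‖ + 1)) := min_le_right _ _
      have h2 : (0:ℝ) ≤ ‖b - a‖ := norm_nonneg _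
      calc δ * ‖b - a‖ ≤ 1 / (2 * (‖b - a‖ + 1)) * ‖b - a‖ := by
            apply mul_le_mul_of_nonneg_right h1 h2
        _ < 1 := by
            rw [div_mul_eq_mul_div, div_lt_one (by positivity)]
            nlinarith
    have hball : ∀ s : ℝ, |s - t₀| ≤ δ → γ s ∈ ball (γ t₀) 1 := by
      intro s hs
      rw [mem_ball, dist_eq_norm]
      have : γ s - γ t₀ = (s - t₀) • (b - a) := by
        simp only [hγ]; module
      rw [this, norm_smul, Real.norm_eq_abs]
      calc |s - t₀| * ‖b - a‖ ≤ δ * ‖b - a‖ := by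
            apply mul_le_mul_of_nonneg_right hs (norm_nonneg _)
        _ < 1 := hδn
    have hmem1 : γ (t₀ - δ) ∈ ball (γ t₀) 1 := hball _ (by rw [abs_of_nonpos (by linarith)]; linarith)
    have hmem2 : γ (t₀ + δ) ∈ ball (γ t₀) 1 := hball _ (by rw [abs_of_nonneg (by linarith)]; linarith)
    have hmid : f (γ t₀) ≤ (1/2) * f (γ (t₀ - δ)) + (1/2) * f (γ (t₀ + δ)) := by
      have := (hf (γ t₀)).2 hmem1 hmem2 (by norm_num : (0:ℝ) ≤ 1/2) (by norm_num : (0:ℝ) ≤ 1/2)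
        (by norm_num)
      have hcomb : (1/2 : ℝ) • γ (t₀ - δ) + (1/2 : ℝ) • γ (t₀ + δ) = γ t₀ := by
        simp only [hγ]; module
      rw [hcomb] at this
      simpa [smul_eq_mul] using this
    have haff : (1 - t₀) * f a + t₀ * f b =
        1/2 * ((1 - (t₀ - δ)) * f a + (t₀ - δ) * f b)
          + 1/2 * ((1 - (t₀ + δ)) * f a + (t₀ + δ) * f b) := by ring
    have humid : u t₀ ≤ (1/2) * u (t₀ - δ) + (1/2) * u (t₀ + δ) := by
      simp only [hu]; linarith [hmid, haff]
    have h1 : u (t₀ - δ) ≤ M := hmax (⟨by linarith, by linarith⟩ : t₀ - δ ∈ Icc (0:ℝ) 1)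
    have h2 : u (t₀ + δ) < M := by
      have hle : u (t₀ + δ) ≤ M := hmax (show t₀ + δ ∈ Icc (0:ℝ) 1 from ⟨by linarith, by linarith⟩)
      rcases lt_or_eq_of_le hle with h | h
      · exact h
      · exfalso
        have : t₀ + δ ∈ A := ⟨⟨by linarith, by linarith⟩, h⟩
        have := le_csSup hAcp.bddAbove this
        linarith
    clear_value A t₀ δ M u γ
    have hfin : M < M := by
      calc M = u t₀ := huM.symm
        _ ≤ 1/2 * u (t₀ - δ) + 1/2 * u (t₀ + δ) := humid
        _ < 1/2 * M + 1/2 * M := by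
            have e1 : 1/2 * u (t₀ - δ) ≤ 1/2 * M := by linarith
            have e2 : 1/2 * u (t₀ + δ) < 1/2 * M := by linarith
            linarith
        _ = M := by ring
    exact lt_irrefl M hfin
  have hq1 : q ∈ Icc (0:ℝ) 1 := ⟨hq, by linarith⟩
  have hkey := key q hq1
  simp only [hu] at hkey
  have hp1 : p = 1 - q := by linarith
  have hcomb : p • a + q • b = γ q := by
    simp only [hγ, hp1]; module
  rw [hcomb, hp1]
  simp only [smul_eq_mul]
  linarith [hkey]

noncomputable def thetaF (c : ℕ → ℝ) (t : ℝ) : ℝ := ∑' R : ℕ, c R * max 0 (t - (R:ℝ)^2)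

lemma thetaF_term_zero (c : ℕ → ℝ) (t : ℝ) {R : ℕ} (hR : t ≤ (R:ℝ)^2) :
    c R * max 0 (t - (R:ℝ)^2) = 0 := by
  rw [max_eq_left (by linarith), mul_zero]

lemma thetaF_summable (c : ℕ → ℝ) (t : ℝ) :
    Summable (fun R : ℕ => c R * max 0 (t - (R:ℝ)^2)) := by
  apply summable_of_finite_support
  apply Set.Finite.subset (Set.finite_Icc 0 (Nat.ceil (max 0 t)))
  intro R hR
  simp only [Function.mem_support] at hR
  by_contra hc
  simp only [Set.mem_Icc, not_and, not_le] at hc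
  have h1 : Nat.ceil (max 0 t) < R := hc (Nat.zero_le R)
  apply hR
  apply thetaF_term_zero
  have h2 : max 0 t ≤ (R:ℝ) := by
    calc max 0 t ≤ (Nat.ceil (max 0 t) : ℝ) := Nat.le_ceil _
      _ ≤ (R:ℝ) := by exact_mod_cast h1.le
  have hR1 : 1 ≤ (R:ℝ) := by exact_mod_cast Nat.one_le_iff_ne_zero.mpr (by omega)
  have h3 : (R:ℝ) ≤ (R:ℝ)^2 := by nlinarith
  calc t ≤ max 0 t := le_max_right 0 t
    _ ≤ (R:ℝ) := h2
    _ ≤ _ := h3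

lemma thetaF_mono (c : ℕ → ℝ) (hc : ∀ R, 0 ≤ c R) : Monotone (thetaF c) := by
  intro t₁ t₂ ht
  apply Summable.tsum_le_tsum _ (thetaF_summable c t₁) (thetaF_summable c t₂)
  intro R
  apply mul_le_mul_of_nonneg_left _ (hc R)
  exact max_le_max le_rfl (by linarith)

lemma thetaF_convexOn (c : ℕ → ℝ) (hc : ∀ R, 0 ≤ c R) : ConvexOn ℝ univ (thetaF c) := by
  refine ⟨convex_univ, fun a _ b _ p q hp hq hpq => ?_⟩
  have hterm : ∀ R : ℕ, ConvexOn ℝ univ (fun t : ℝ => c R * max 0 (t - (R:ℝ)^2)) := by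
    intro R
    have h0 : ConvexOn ℝ univ (fun t : ℝ => max 0 (t - (R:ℝ)^2)) := by
      have h1 : ConvexOn ℝ univ (fun _ : ℝ => (0:ℝ)) := convexOn_const _ convex_univ
      have h2 : ConvexOn ℝ univ (fun t : ℝ => t - (R:ℝ)^2) := by
        refine ⟨convex_univ, fun x _ y _ p q hp hq hpq => ?_⟩
        simp [smul_eq_mul]; nlinarith
      simpa [Pi.sup_def] using h1.sup h2
    simpa [smul_eq_mul] using h0.smul (hc R)
  calc thetaF c (p • a + q • b)
      ≤ ∑' R : ℕ, (p * (c R * max 0 (a - (R:ℝ)^2)) + q * (c R * max 0 (b - (R:ℝ)^2))) := by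
        apply Summable.tsum_le_tsum _ (thetaF_summable c _) _
        · intro R
          simpa [smul_eq_mul] using (hterm R).2 (mem_univ a) (mem_univ b) hp hq hpq
        · exact ((thetaF_summable c a).mul_left p).add ((thetaF_summable c b).mul_left q)
    _ = p • thetaF c a + q • thetaF c b := by
        rw [Summable.tsum_add ((thetaF_summable c a).mul_left p) ((thetaF_summable c b).mul_left q)]
        rw [_root_.tsum_mul_left, _root_.tsum_mul_left]
        simp [thetaF, smul_eq_mul]

lemma thetaF_slope (c : ℕ → ℝ) (hc : ∀ R, 0 ≤ c R) (n : ℕ) {t₁ t₂ : ℝ}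
    (h1 : ((n:ℝ))^2 ≤ t₁) (h12 : t₁ ≤ t₂) :
    thetaF c t₁ + c n * (t₂ - t₁) ≤ thetaF c t₂ := by
  classical
  have hsum1 := thetaF_summable c t₁
  have hsum2 := thetaF_summable c t₂
  have hind : Summable (fun R : ℕ => if R = n then c n * (t₂ - t₁) else 0) := by
    apply summable_of_finite_support
    apply Set.Finite.subset (Set.finite_singleton n)
    intro R hR
    simp only [Function.mem_support] at hR
    by_contra hco
    simp only [Set.mem_singleton_iff] at hco
    exact hR (if_neg hco)
  have key : ∀ R : ℕ, (fun R => c R * max 0 (t₁ - (R:ℝ)^2)) R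
      + (if R = n then c n * (t₂ - t₁) else 0) ≤ c R * max 0 (t₂ - (R:ℝ)^2) := by
    intro R
    by_cases hR : R = n
    · subst hR
      rw [if_pos rfl]
      show c R * (0 ⊔ (t₁ - (R:ℝ)^2)) + c R * (t₂ - t₁) ≤ c R * (0 ⊔ (t₂ - (R:ℝ)^2))
      rw [max_eq_right (by linarith : (0:ℝ) ≤ t₁ - (R:ℝ)^2),
        max_eq_right (by linarith : (0:ℝ) ≤ t₂ - (R:ℝ)^2)]
      exact le_of_eq (by ring)
    · simp only [if_neg hR, add_zero]
      exact mul_le_mul_of_nonneg_left (max_le_max le_rfl (by linarith)) (hc R)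
  calc thetaF c t₁ + c n * (t₂ - t₁)
      = ∑' R : ℕ, ((fun R => c R * max 0 (t₁ - (R:ℝ)^2)) R + (if R = n then c n * (t₂ - t₁) else 0)) := by
        rw [Summable.tsum_add hsum1 hind, tsum_ite_eq]
        rfl
    _ ≤ thetaF c t₂ := Summable.tsum_le_tsum key (hsum1.add hind) hsum2

/-- Key compensation lemma: if `h` is convex and Lipschitz on a convex set `U` containing
the image of `G = φ - ψ` on `V`, then `h ∘ G + L * Σ (φ + ψ)` is convex on `V`. -/
lemma comp_lipschitz_convexOn {d m : ℕ} (h : (Fin d → ℝ) → ℝ) (U : Set (Fin d → ℝ))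
    (V : Set (Fin m → ℝ)) (φ ψ : Fin d → (Fin m → ℝ) → ℝ)
    (hφ : ∀ j, ConvexOn ℝ univ (φ j)) (hψ : ∀ j, ConvexOn ℝ univ (ψ j))
    (hU : Convex ℝ U) (hV : Convex ℝ V) (hh : ConvexOn ℝ U h) (L : ℝ≥0)
    (hLip : LipschitzOnWith L h U)
    (hGU : ∀ y ∈ V, (fun j => φ j y - ψ j y) ∈ U) :
    ConvexOn ℝ V (fun y => h (fun j => φ j y - ψ j y)
      + L * ∑ j, (φ j y + ψ j y)) := by
  refine ⟨hV, fun a ha b hb p q hp hq hpq => ?_⟩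
  set y := p • a + q • b with hy
  have hyV : y ∈ V := hV ha hb hp hq hpq
  set Ga : Fin d → ℝ := fun j => φ j a - ψ j a with hGa
  set Gb : Fin d → ℝ := fun j => φ j b - ψ j b with hGb
  set Gy : Fin d → ℝ := fun j => φ j y - ψ j y with hGy
  set u : Fin d → ℝ := p • Ga + q • Gb with hu2
  have hGaU : Ga ∈ U := hGU a ha
  have hGbU : Gb ∈ U := hGU b hb
  have hGyU : Gy ∈ U := hGU y hyV
  have huU : u ∈ U := hU hGaU hGbU hp hq hpq
  -- coordinatewise deficits
  have hDφ : ∀ j, φ j y ≤ p * φ j a + q * φ j b := by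
    intro j
    simpa [smul_eq_mul] using (hφ j).2 (mem_univ a) (mem_univ b) hp hq hpq
  have hDψ : ∀ j, ψ j y ≤ p * ψ j a + q * ψ j b := by
    intro j
    simpa [smul_eq_mul] using (hψ j).2 (mem_univ a) (mem_univ b) hp hq hpq
  have hcoord : ∀ j, dist (Gy j) (u j) ≤
      (p * (φ j a + ψ j a) + q * (φ j b + ψ j b)) - (φ j y + ψ j y) := by
    intro j
    have hu3 : u j = p * (φ j a - ψ j a) + q * (φ j b - ψ j b) := by
      simp [hu2, hGa, hGb, smul_eq_mul]
    rw [Real.dist_eq, hGy, hu3]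
    have d1 := hDφ j
    have d2 := hDψ j
    rw [abs_le]
    constructor <;> simp only [neg_sub] <;> nlinarith [d1, d2]
  have hdist : dist Gy u ≤ ∑ j, ((p * (φ j a + ψ j a) + q * (φ j b + ψ j b)) - (φ j y + ψ j y)) := by
    have hnn : ∀ j : Fin d, (0:ℝ) ≤
        (p * (φ j a + ψ j a) + q * (φ j b + ψ j b)) - (φ j y + ψ j y) := by
      intro j; have := hDφ j; have := hDψ j; linarith
    rcases isEmpty_or_nonempty (Fin d) with hd | hd
    · simp [dist_pi_def]
    · refine (dist_pi_le_iff (Finset.sum_nonneg fun j _ => hnn j)).2 fun j => ?_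
      calc dist (Gy j) (u j) ≤ _ := hcoord j
        _ ≤ _ := Finset.single_le_sum (fun i _ => hnn i) (Finset.mem_univ j)
  -- Lipschitz estimate
  have hlip2 : h Gy - h u ≤ L * dist Gy u := by
    have hd := hLip.dist_le_mul Gy hGyU u huU
    rw [Real.dist_eq] at hd
    exact le_trans (le_abs_self _) hd
  -- convexity of h at u
  have hconv : h u ≤ p * h Ga + q * h Gb := by
    simpa [hu2, smul_eq_mul] using hh.2 hGaU hGbU hp hq hpq
  have hLnn : (0:ℝ) ≤ L := L.coe_nonneg
  have hdist2 : (L:ℝ) * dist Gy u ≤ L * (∑ j, ((p * (φ j a + ψ j a) + q * (φ j b + ψ j b)) - (φ j y + ψ j y))) :=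
    mul_le_mul_of_nonneg_left hdist hLnn
  -- final computation
  have hsum : ∑ j, ((p * (φ j a + ψ j a) + q * (φ j b + ψ j b)) - (φ j y + ψ j y))
      = p * (∑ j, (φ j a + ψ j a)) + q * (∑ j, (φ j b + ψ j b)) - ∑ j, (φ j y + ψ j y) := by
    rw [Finset.sum_sub_distrib, Finset.sum_add_distrib, ← Finset.mul_sum, ← Finset.mul_sum]
  rw [hsum] at hdist2
  have goal : h Gy + L * ∑ j, (φ j y + ψ j y)
      ≤ p * (h Ga + L * ∑ j, (φ j a + ψ j a)) + q * (h Gb + L * ∑ j, (φ j b + ψ j b)) := by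
    nlinarith [hlip2, hconv, hdist2]
  simpa [smul_eq_mul, hGy, hGa, hGb] using goal

lemma LipschitzOnWith.weaken' {α β : Type*} [PseudoEMetricSpace α] [PseudoEMetricSpace β]
    {K K' : ℝ≥0} {f : α → β} {s : Set α} (hf : LipschitzOnWith K f s) (h : K ≤ K') :
    LipschitzOnWith K' f s :=
  fun _ hx _ hy => le_trans (hf hx hy) (mul_le_mul_left (ENNReal.coe_le_coe.2 h) _)

/-- Gluing lemma: a function which on every ball `B(0,n)` admits a convex decomposition with
concave part a multiple of a fixed convex `T` is globally d.c. -/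
lemma glue_dc {m : ℕ} (f T : (Fin m → ℝ) → ℝ) (hT : ConvexOn ℝ univ T)
    (hTlb : ∀ y, ‖y‖^2 ≤ T y) (Λ : ℕ → ℝ≥0) (hΛmono : Monotone Λ)
    (hconv : ∀ n : ℕ, ConvexOn ℝ (ball 0 (n:ℝ)) (fun y => f y + (Λ n : ℝ) * T y)) :
    ∃ P Q : (Fin m → ℝ) → ℝ, ConvexOn ℝ univ P ∧ ConvexOn ℝ univ Q ∧
      ∀ y, f y = P y - Q y := by
  have hc : ∀ R : ℕ, 0 ≤ ((Λ (R+4) : ℝ≥0) : ℝ) := fun R => (Λ (R+4)).coe_nonneg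
  set c : ℕ → ℝ := fun R => ((Λ (R+4) : ℝ≥0) : ℝ) with hcdef
  have hQ : ConvexOn ℝ univ (fun y => thetaF c (T y)) :=
    compMonoConvex hT ((thetaF_convexOn c hc).subset (subset_univ _) convex_univ)
      ((thetaF_mono c hc).monotoneOn _) (fun y _ => mem_univ _)
  have hP : ConvexOn ℝ univ (fun y => f y + thetaF c (T y)) := by
    apply locallyConvex_convex
    intro y₀
    set n : ℕ := Nat.ceil ‖y₀‖ with hn
    have hy₀n : ‖y₀‖ ≤ (n:ℝ) := Nat.le_ceil _
    have hsub : ball y₀ 1 ⊆ ball (0 : Fin m → ℝ) ((n+1 : ℕ):ℝ) := by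
      intro y hy
      rw [mem_ball, dist_eq_norm] at hy
      rw [mem_ball_zero_iff]
      have h1 : ‖y‖ - ‖y₀‖ ≤ ‖y - y₀‖ := norm_sub_norm_le y y₀
      push_cast
      linarith
    have conv1 : ConvexOn ℝ (ball y₀ 1) (fun y => f y + (Λ (n+1) : ℝ) * T y) :=
      (hconv (n+1)).subset hsub (convex_ball _ _)
    set β : ℝ := ((n - 2 : ℕ) : ℝ) with hβ
    have hβnn : 0 ≤ β := Nat.cast_nonneg _
    have hball_lb : ∀ y ∈ ball y₀ 1, β^2 ≤ T y := by
      intro y hy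
      rw [mem_ball, dist_eq_norm] at hy
      have h1 : β ≤ ‖y‖ := by
        rcases Nat.lt_or_ge n 2 with h2 | h2
        · have : n - 2 = 0 := by omega
          rw [hβ, this]
          simpa using norm_nonneg y
        · have hcast : β = (n:ℝ) - 2 := by
            rw [hβ]; push_cast [Nat.cast_sub h2]; ring
          have hne : (n - 1 : ℕ) < n := by omega
          have hlt : ((n - 1 : ℕ) : ℝ) < ‖y₀‖ := by
            rw [← hn] at *
            exact_mod_cast Nat.lt_ceil.mp (by omega)
          have hcast2 : ((n - 1 : ℕ) : ℝ) = (n:ℝ) - 1 := by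
            push_cast [Nat.cast_sub (by omega : 1 ≤ n)]; ring
          have h3 : ‖y₀‖ - ‖y‖ ≤ ‖y - y₀‖ := by
            have := norm_sub_norm_le y₀ y
            rwa [norm_sub_rev] at this
          rw [hcast]
          rw [hcast2] at hlt
          linarith
      calc β^2 ≤ ‖y‖^2 := by nlinarith [norm_nonneg y]
        _ ≤ T y := hTlb y
    set ω : ℝ → ℝ := fun t => thetaF c t - (Λ (n+1) : ℝ) * t with hω
    have hωconv : ConvexOn ℝ (Ici (β^2)) ω := by
      refine ⟨convex_Ici _, fun a _ b _ p q hp hq hpq => ?_⟩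
      have hθ := (thetaF_convexOn c hc).2 (mem_univ a) (mem_univ b) hp hq hpq
      simp only [smul_eq_mul] at hθ ⊢
      simp only [hω]
      nlinarith [hθ]
    have hωmono : MonotoneOn ω (Ici (β^2)) := by
      intro t₁ h₁ t₂ h₂ h12
      have hsl := thetaF_slope c hc (n - 2) (by rw [← hβ]; exact h₁) h12
      have hΛle : ((Λ (n+1) : ℝ≥0) : ℝ) ≤ c (n - 2) := by
        have : Λ (n+1) ≤ Λ ((n-2)+4) := hΛmono (by omega)
        exact_mod_cast this
      simp only [hω]
      nlinarith [hsl, hΛle]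
    have conv2 : ConvexOn ℝ (ball y₀ 1) (fun y => ω (T y)) :=
      compMonoConvex (hT.subset (subset_univ _) (convex_ball _ _)) hωconv hωmono
        (fun y hy => hball_lb y hy)
    have hfun : (fun y => f y + thetaF c (T y))
        = fun y => (f y + (Λ (n+1) : ℝ) * T y) + ω (T y) := by
      funext y; simp only [hω]; ring
    rw [hfun]
    exact conv1.add conv2
  exact ⟨_, _, hP, hQ, fun y => by ring⟩

/-- Composition of a convex function with a d.c. mapping is d.c. -/
lemma comp_convex_dc {d m : ℕ} (h : (Fin d → ℝ) → ℝ) (hh : ConvexOn ℝ univ h)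
    (φ ψ : Fin d → (Fin m → ℝ) → ℝ)
    (hφ : ∀ j, ConvexOn ℝ univ (φ j)) (hψ : ∀ j, ConvexOn ℝ univ (ψ j)) :
    ∃ P Q : (Fin m → ℝ) → ℝ, ConvexOn ℝ univ P ∧ ConvexOn ℝ univ Q ∧
      ∀ y, h (fun j => φ j y - ψ j y) = P y - Q y := by
  have hcont : Continuous h := continuousOn_univ.mp (hh.continuousOn isOpen_univ)
  set S : (Fin m → ℝ) → ℝ := fun y => ∑ j, (φ j y + ψ j y) with hSdef
  have hS : ConvexOn ℝ univ S := by
    have key : ∀ s : Finset (Fin d), ConvexOn ℝ univ (fun y => ∑ j ∈ s, (φ j y + ψ j y)) := by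
      intro s
      induction s using Finset.induction with
      | empty => simpa using convexOn_const (0:ℝ) convex_univ
      | insert _ _ hj ih =>
          simp only [Finset.sum_insert hj]
          exact ((hφ _).add (hψ _)).add ih
    exact key Finset.univ
  have hScont : Continuous S := continuousOn_univ.mp (hS.continuousOn isOpen_univ)
  set G : (Fin m → ℝ) → (Fin d → ℝ) := fun y => (fun j => φ j y - ψ j y) with hGdef
  have hGcont : Continuous G := by
    apply continuous_pi
    intro j
    exact (continuousOn_univ.mp ((hφ j).continuousOn isOpen_univ)).sub
      (continuousOn_univ.mp ((hψ j).continuousOn isOpen_univ))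
  -- bound for S on the unit ball
  obtain ⟨C, hC⟩ := (isCompact_closedBall (0 : Fin m → ℝ) 1).exists_bound_of_continuousOn
    hScont.continuousOn
  have hC0 : 0 ≤ C := le_trans (norm_nonneg _) (hC 0 (mem_closedBall_self zero_le_one))
  -- linear lower bound for S
  have Slb : ∀ y, -(C + 2*C*‖y‖) ≤ S y := by
    intro y
    by_cases hy : ‖y‖ ≤ 1
    · have h1 := hC y (by rwa [mem_closedBall, dist_zero_right])
      rw [Real.norm_eq_abs] at h1
      have h2 := (abs_le.1 h1).1
      nlinarith [norm_nonneg y]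
    · push_neg at hy
      have hy0 : ‖y‖ ≠ 0 := by positivity
      have hσ : ConvexOn ℝ univ (fun τ : ℝ => S (τ • (‖y‖⁻¹ • y))) := by
        have hcomp := hS.comp_affineMap (AffineMap.lineMap (0 : Fin m → ℝ) (‖y‖⁻¹ • y))
        rw [Set.preimage_univ] at hcomp
        have hfun : (S ∘ (AffineMap.lineMap (0 : Fin m → ℝ) (‖y‖⁻¹ • y)))
            = fun τ : ℝ => S (τ • (‖y‖⁻¹ • y)) := by
          funext τ
          simp [AffineMap.lineMap_apply]
        rwa [hfun] at hcomp
      have hsl := hσ.slope_mono_adjacent (mem_univ (0:ℝ)) (mem_univ ‖y‖) one_pos hy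
      simp only [zero_smul, one_smul, sub_zero] at hsl
      have hyy : ‖y‖ • ‖y‖⁻¹ • y = y := by
        rw [smul_smul, mul_inv_cancel₀ hy0, one_smul]
      rw [hyy] at hsl
      -- hsl : (S (‖y‖⁻¹ • y) - S 0) / 1 ≤ (S y - S (‖y‖⁻¹ • y)) / (‖y‖ - 1)
      have hbe : ‖(‖y‖⁻¹ • y)‖ = 1 := by
        rw [norm_smul, norm_inv, norm_norm, inv_mul_cancel₀ hy0]
      have hSe := hC (‖y‖⁻¹ • y) (by rw [mem_closedBall, dist_zero_right, hbe])
      have hS0 := hC 0 (mem_closedBall_self zero_le_one)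
      rw [Real.norm_eq_abs] at hSe hS0
      obtain ⟨hSe1, hSe2⟩ := abs_le.1 hSe
      obtain ⟨hS01, hS02⟩ := abs_le.1 hS0
      have hpos : (0:ℝ) < ‖y‖ - 1 := by linarith
      rw [div_le_div_iff₀ one_pos hpos] at hsl
      nlinarith [hsl]
  -- the compensating convex function T
  set T : (Fin m → ℝ) → ℝ := fun y => S y + (C + 2*C*‖y‖ + ‖y‖^2) with hTdef
  have hnormsq : ConvexOn ℝ univ (fun y : Fin m → ℝ => ‖y‖^2) := by
    apply compMonoConvex (t := Ici (0:ℝ)) convexOn_univ_norm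
      ((Even.convexOn_pow even_two).subset (subset_univ _) (convex_Ici 0))
    · intro a ha b hb hab
      exact pow_le_pow_left₀ ha hab 2
    · exact fun y _ => norm_nonneg y
  have hTmS : ConvexOn ℝ univ (fun y : Fin m → ℝ => C + 2*C*‖y‖ + ‖y‖^2) := by
    have h1 : ConvexOn ℝ univ (fun y : Fin m → ℝ => 2*C*‖y‖) := by
      have := convexOn_univ_norm (E := Fin m → ℝ).smul (by positivity : (0:ℝ) ≤ 2*C)
      simpa [smul_eq_mul] using this
    exact ((convexOn_const C convex_univ).add h1).add hnormsq
  have hT : ConvexOn ℝ univ T := hS.add hTmS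
  have hTlb : ∀ y, ‖y‖^2 ≤ T y := by
    intro y
    have := Slb y
    rw [hTdef]
    simp only
    nlinarith [this]
  -- bounds for G on balls
  have hMex : ∀ n : ℕ, ∃ Mn : ℝ, ∀ y ∈ closedBall (0 : Fin m → ℝ) (n:ℝ), ‖G y‖ ≤ Mn :=
    fun n => (isCompact_closedBall _ _).exists_bound_of_continuousOn hGcont.continuousOn
  choose M hM using hMex
  -- Lipschitz constants for h on balls of radius M n + 1
  have hLex : ∀ n : ℕ, ∃ K : ℝ≥0, LipschitzOnWith K h (ball 0 (M n + 1)) := by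
    intro n
    obtain ⟨B, hB⟩ := (isCompact_closedBall (0 : Fin d → ℝ) (M n + 2)).exists_bound_of_continuousOn
      hcont.continuousOn
    have hbdd : Bornology.IsBounded (h '' ball (0 : Fin d → ℝ) (M n + 2)) := by
      rw [isBounded_iff_forall_norm_le]
      exact ⟨B, fun x hx => by obtain ⟨z, hz, rfl⟩ := hx; exact hB z (ball_subset_closedBall hz)⟩
    exact (hh.subset (subset_univ _) (convex_ball _ _)).exists_lipschitzOnWith_of_isBounded
      (by linarith : M n + 1 < M n + 2) hbdd
  choose L hL using hLex
  set Λ : ℕ → ℝ≥0 := fun n => Finset.sup (Finset.range (n+1)) L with hΛdef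
  have hΛmono : Monotone Λ := by
    intro a b hab
    exact Finset.sup_mono (Finset.range_subset_range.mpr (by omega))
  have hΛLip : ∀ n, LipschitzOnWith (Λ n) h (ball 0 (M n + 1)) :=
    fun n => (hL n).weaken' (Finset.le_sup (Finset.self_mem_range_succ n))
  -- local convex decompositions
  have hconv : ∀ n : ℕ, ConvexOn ℝ (ball 0 (n:ℝ))
      (fun y => h (G y) + ((Λ n : ℝ≥0) : ℝ) * T y) := by
    intro n
    have hGU : ∀ y ∈ ball (0 : Fin m → ℝ) (n:ℝ),
        (fun j => φ j y - ψ j y) ∈ ball (0 : Fin d → ℝ) (M n + 1) := by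
      intro y hy
      rw [mem_ball_zero_iff]
      have := hM n y (ball_subset_closedBall hy)
      rw [hGdef] at this
      simp only at this
      linarith
    have base := comp_lipschitz_convexOn h (ball 0 (M n + 1)) (ball 0 (n:ℝ)) φ ψ hφ hψ
      (convex_ball _ _) (convex_ball _ _) (hh.subset (subset_univ _) (convex_ball _ _))
      (Λ n) (hΛLip n) hGU
    have hrest : ConvexOn ℝ (ball (0 : Fin m → ℝ) (n:ℝ))
        (fun y : Fin m → ℝ => ((Λ n : ℝ≥0) : ℝ) * (C + 2*C*‖y‖ + ‖y‖^2)) := by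
      have h0 : ConvexOn ℝ univ
          (fun y : Fin m → ℝ => ((Λ n : ℝ≥0) : ℝ) * (C + 2*C*‖y‖ + ‖y‖^2)) := by
        simpa [smul_eq_mul] using (hTmS.smul (Λ n).coe_nonneg)
      exact h0.subset (subset_univ _) (convex_ball _ _)
    have hfun : (fun y => h (G y) + ((Λ n : ℝ≥0) : ℝ) * T y)
        = fun y => (h (fun j => φ j y - ψ j y) + ((Λ n : ℝ≥0) : ℝ) * ∑ j, (φ j y + ψ j y))
          + ((Λ n : ℝ≥0) : ℝ) * (C + 2*C*‖y‖ + ‖y‖^2) := by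
      funext y
      rw [hTdef, hGdef, hSdef]
      simp only
      ring
    rw [hfun]
    exact base.add hrest
  obtain ⟨P, Q, hP, hQ, hPQ⟩ := glue_dc (fun y => h (G y)) T hT hTlb Λ hΛmono hconv
  exact ⟨P, Q, hP, hQ, fun y => by rw [← hPQ y, hGdef]⟩

theorem dc_mapping_comp {d k m : ℕ}
    (F : (Fin d → ℝ) → Fin k → ℝ) (G : (Fin m → ℝ) → Fin d → ℝ)
    (hF : ∀ i, IsDC fun x => F x i) (hG : ∀ j, IsDC fun y => G y j)
    (hFLip : LocallyLipschitz F) :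
    ∀ i, IsDC fun y => F (G y) i := by
  intro i
  obtain ⟨α, β, hα, hβ, hαβ⟩ := hF i
  choose φ ψ hφ hψ hEq using hG
  have hGfun : ∀ y, G y = fun j => φ j y - ψ j y := by
    intro y; funext j; exact hEq j y
  obtain ⟨P₁, Q₁, hP₁, hQ₁, hPQ₁⟩ := comp_convex_dc α hα φ ψ hφ hψ
  obtain ⟨P₂, Q₂, hP₂, hQ₂, hPQ₂⟩ := comp_convex_dc β hβ φ ψ hφ hψ
  refine ⟨fun y => P₁ y + Q₂ y, fun y => Q₁ y + P₂ y, hP₁.add hQ₂, hQ₁.add hP₂, fun y => ?_⟩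
  have h1 := hPQ₁ y
  have h2 := hPQ₂ y
  rw [← hGfun y] at h1 h2
  have h3 := hαβ (G y)
  simp only at h3
  show F (G y) i = (P₁ y + Q₂ y) - (Q₁ y + P₂ y)
  rw [h3]
  linarith
end

section
/- Let f, g : ℝ → ℝ with f convex and g convex and f additionally Lipschitz. Then f ∘ g is a d.c. function (a difference of two convex functions) on ℝ. -/
theorem convex_comp_lipschitz_convex_isDC (f g : ℝ → ℝ) (L : NNReal)
    (hf : ConvexOn ℝ Set.univ f) (hg : ConvexOn ℝ Set.univ g)
    (hfLip : LipschitzWith L f) :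
    ∃ φ ψ : ℝ → ℝ, ConvexOn ℝ Set.univ φ ∧ ConvexOn ℝ Set.univ ψ ∧
      ∀ x, f (g x) = φ x - ψ x := by
  set c : ℝ := (L : ℝ) with hcdef
  have hc : 0 ≤ c := L.coe_nonneg
  have hψ : ConvexOn ℝ Set.univ (fun x => c * g x) := by
    simpa [smul_eq_mul] using hg.smul hc
  refine ⟨fun x => f (g x) + c * g x, fun x => c * g x, ?_, hψ, fun x => by ring⟩
  constructor
  · exact convex_univ
  · intro x _ y _ a b ha hb hab
    simp only [smul_eq_mul]
    have hgc : g (a * x + b * y) ≤ a * g x + b * g y := by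
      simpa using hg.2 (Set.mem_univ x) (Set.mem_univ y) ha hb hab
    have hfc : f (a * g x + b * g y) ≤ a * f (g x) + b * f (g y) := by
      simpa using hf.2 (Set.mem_univ (g x)) (Set.mem_univ (g y)) ha hb hab
    have hlip : f (g (a * x + b * y)) - f (a * g x + b * g y)
        ≤ c * ((a * g x + b * g y) - g (a * x + b * y)) := by
      have h := hfLip.dist_le_mul (g (a * x + b * y)) (a * g x + b * g y)
      rw [Real.dist_eq, Real.dist_eq] at h
      have h1 := le_abs_self (f (g (a * x + b * y)) - f (a * g x + b * g y))
      have h2 : |g (a * x + b * y) - (a * g x + b * g y)|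
          = (a * g x + b * g y) - g (a * x + b * y) := by
        rw [abs_sub_comm, abs_of_nonneg (by linarith)]
      rw [h2] at h
      linarith
    nlinarith [hlip, hfc]
end
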